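/- arXiv:0912.2534 — 2 statements merged into one kernel-verified Lean document; each statement's English description precedes it below -/
import Mathlib

section
/- Let A ∈ ℝ≥0^{n×n} with λ(A) = 1 and let P^(t) = C ⊗ S^t ⊗ R be the CSR product associated with a completely reducible subgraph C of the critical graph. Then for all t ≥ 0 and all i, j, the maximum weight of all paths of length t from i to j in D(A) that pass through at least one node of C is at most P^(t)_{ij}. -/
open scoped NNReal Classical

namespace MaxAlg

/-- Max-times matrix product over `ℝ≥0`. -/
noncomputable def mmul {n : ℕ} (A B : Fin n → Fin n → ℝ≥0) : Fin n → Fin n → ℝ≥0 :=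
  fun i j => Finset.univ.sup fun k => A i k * B k j

/-- Max-algebraic powers of a matrix, with `mpow A 0` the identity. -/
noncomputable def mpow {n : ℕ} (A : Fin n → Fin n → ℝ≥0) : ℕ → (Fin n → Fin n → ℝ≥0)
  | 0 => fun i j => if i = j then 1 else 0
  | (k+1) => mmul A (mpow A k)

/-- Weight of a walk `p` of length `k` (product of the edge weights). -/
noncomputable def pathWeight {n : ℕ} (A : Fin n → Fin n → ℝ≥0) (k : ℕ)
    (p : Fin (k+1) → Fin n) : ℝ≥0 :=
  ∏ t : Fin k, A (p t.castSucc) (p t.succ)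

/-- `p` is a walk in the edge relation `E`. -/
def IsEPath {n : ℕ} (E : Fin n → Fin n → Prop) (k : ℕ) (p : Fin (k+1) → Fin n) : Prop :=
  ∀ t : Fin k, E (p t.castSucc) (p t.succ)

/-- `j` is reachable from `i` in `E` (possibly by the empty path). -/
def Reach {n : ℕ} (E : Fin n → Fin n → Prop) (i j : Fin n) : Prop :=
  ∃ k, ∃ p : Fin (k+1) → Fin n, IsEPath E k p ∧ p 0 = i ∧ p (Fin.last k) = j

/-- Edge relation of the digraph associated with a nonnegative matrix. -/
def edges {n : ℕ} (A : Fin n → Fin n → ℝ≥0) (i j : Fin n) : Prop := A i j ≠ 0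

/-- Lengths of (positive-length) closed walks through `i` in `E`. -/
def cycLen {n : ℕ} (E : Fin n → Fin n → Prop) (i : Fin n) : Set ℕ :=
  {k | 0 < k ∧ ∃ p : Fin (k+1) → Fin n, IsEPath E k p ∧ p 0 = i ∧ p (Fin.last k) = i}

/-- Lengths of all closed walks in `E`. -/
def allCycLen {n : ℕ} (E : Fin n → Fin n → Prop) : Set ℕ :=
  {k | ∃ i, k ∈ cycLen E i}

/-- The gcd of a set of naturals, characterized by the gcd property. -/
noncomputable def setGcd (S : Set ℕ) : ℕ :=
  sInf {d | (∀ s ∈ S, d ∣ s) ∧ ∀ e : ℕ, (∀ s ∈ S, e ∣ s) → e ∣ d}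

/-- Cyclicity of a (completely reducible) digraph: lcm over the nodes of the
gcd of the cycle lengths through that node. -/
noncomputable def graphCyc {n : ℕ} (E : Fin n → Fin n → Prop) : ℕ :=
  Finset.univ.lcm fun i => if (cycLen E i).Nonempty then setGcd (cycLen E i) else 1

/-- The maximum cycle geometric mean `λ(A)`. -/
noncomputable def mcgm {n : ℕ} (A : Fin n → Fin n → ℝ≥0) : ℝ≥0 :=
  sSup {x | ∃ k : ℕ, 0 < k ∧ k ≤ n ∧ ∃ p : Fin (k+1) → Fin n,
    p 0 = p (Fin.last k) ∧ x = pathWeight A k p ^ ((1 : ℝ) / (k : ℝ))}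

/-- The Kleene star `A* = I ⊕ A ⊕ A² ⊕ ⋯` (entrywise supremum of all powers). -/
noncomputable def kleeneStar {n : ℕ} (A : Fin n → Fin n → ℝ≥0) : Fin n → Fin n → ℝ≥0 :=
  fun i j => ⨆ k : ℕ, mpow A k i j

/-- `(i,j)` is a critical edge: it lies on a cycle attaining `λ(A)`. -/
def IsCriticalEdge {n : ℕ} (A : Fin n → Fin n → ℝ≥0) (i j : Fin n) : Prop :=
  ∃ k : ℕ, 0 < k ∧ k ≤ n ∧ ∃ p : Fin (k+1) → Fin n, p 0 = p (Fin.last k) ∧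
    pathWeight A k p ^ ((1 : ℝ) / (k : ℝ)) = mcgm A ∧
    ∃ t : Fin k, p t.castSucc = i ∧ p t.succ = j

/-- A node lying on a critical cycle of `A`. -/
def IsCriticalNode {n : ℕ} (A : Fin n → Fin n → ℝ≥0) (i : Fin n) : Prop :=
  (∃ j, IsCriticalEdge A i j) ∨ (∃ j, IsCriticalEdge A j i)

/-- A completely reducible subgraph of the critical graph of `A`:
every edge is critical, and every edge can be completed to a cycle of the
subgraph (so each weakly connected part is strongly connected). -/
structure CritSubgraph {n : ℕ} (A : Fin n → Fin n → ℝ≥0) where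
  E : Fin n → Fin n → Prop
  critical : ∀ i j, E i j → IsCriticalEdge A i j
  reducible : ∀ i j, E i j → ∃ k, ∃ p : Fin (k+1) → Fin n,
    IsEPath E k p ∧ p 0 = j ∧ p (Fin.last k) = i

/-- Node set `N_c` of the subgraph. -/
def CritSubgraph.Nc {n : ℕ} {A : Fin n → Fin n → ℝ≥0} (G : CritSubgraph A) (i : Fin n) : Prop :=
  (∃ j, G.E i j) ∨ (∃ j, G.E j i)

/-- The matrix `C`: columns of `(A^γ)*` with indices in `N_c`, other columns zero. -/
noncomputable def Cmat {n : ℕ} (A : Fin n → Fin n → ℝ≥0) (G : CritSubgraph A) :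
    Fin n → Fin n → ℝ≥0 :=
  fun i j => if G.Nc j then kleeneStar (mpow A (graphCyc G.E)) i j else 0

/-- The matrix `R`: rows of `(A^γ)*` with indices in `N_c`, other rows zero. -/
noncomputable def Rmat {n : ℕ} (A : Fin n → Fin n → ℝ≥0) (G : CritSubgraph A) :
    Fin n → Fin n → ℝ≥0 :=
  fun i j => if G.Nc i then kleeneStar (mpow A (graphCyc G.E)) i j else 0

/-- The matrix `S`: the restriction of `A` to the edges of the subgraph. -/
noncomputable def Smat {n : ℕ} (A : Fin n → Fin n → ℝ≥0) (G : CritSubgraph A) :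
    Fin n → Fin n → ℝ≥0 :=
  fun i j => if G.E i j then A i j else 0

/-- The CSR product `P^(t) = C ⊗ S^t ⊗ R`. -/
noncomputable def csr {n : ℕ} (A : Fin n → Fin n → ℝ≥0) (G : CritSubgraph A) (t : ℕ) :
    Fin n → Fin n → ℝ≥0 :=
  mmul (mmul (Cmat A G) (mpow (Smat A G) t)) (Rmat A G)

/-- The strongly connected component (as a node set) of `i` in `E`. -/
def scc {n : ℕ} (E : Fin n → Fin n → Prop) (i : Fin n) : Set (Fin n) :=
  {j | Reach E i j ∧ Reach E j i}

/-- The principal submatrix of `A` on the strongly connected component of `i`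
in `D(A)` (other entries zero). -/
noncomputable def compMat {n : ℕ} (A : Fin n → Fin n → ℝ≥0) (i : Fin n) :
    Fin n → Fin n → ℝ≥0 :=
  fun a b => if a ∈ scc (edges A) i ∧ b ∈ scc (edges A) i then A a b else 0

/-- `λ(i)`: the m.c.g.m. of the component of `D(A)` containing `i`. -/
noncomputable def lamNode {n : ℕ} (A : Fin n → Fin n → ℝ≥0) (i : Fin n) : ℝ≥0 :=
  mcgm (compMat A i)

/-- `i` belongs to a nontrivial component of `D(A)` (it lies on a cycle). -/
def Nontrivial' {n : ℕ} (A : Fin n → Fin n → ℝ≥0) (i : Fin n) : Prop :=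
  (cycLen (edges A) i).Nonempty

/-- `γ`: the lcm of the cyclicities of the critical graphs of the nontrivial
components of `D(A)`. -/
noncomputable def gammaU {n : ℕ} (A : Fin n → Fin n → ℝ≥0) : ℕ :=
  Finset.univ.lcm fun i =>
    if Nontrivial' A i then graphCyc (IsCriticalEdge (compMat A i)) else 1

/-- Max-times matrix-vector product. -/
noncomputable def mvec {n : ℕ} (M : Fin n → Fin n → ℝ≥0) (y : Fin n → ℝ≥0) :
    Fin n → ℝ≥0 :=
  fun a => Finset.univ.sup fun k => M a k * y k

/-- `i` strongly accesses `j`: paths of every sufficiently large length exist. -/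
def StrongAccess {n : ℕ} (E : Fin n → Fin n → Prop) (i j : Fin n) : Prop :=
  ∃ T, ∀ t ≥ T, ∃ p : Fin (t+1) → Fin n, IsEPath E t p ∧ p 0 = i ∧ p (Fin.last t) = j

/-!
Since `λ(A) = 1`, a closed walk of length at most `n` has weight at most `1`, and cutting a
longer walk at a repeated node shows that every power of `A` is dominated by one of exponent at
most `n`. So all closed walks have weight at most `1`, the powers of `A` are bounded, and the
supremum defining `(A^γ)*` is a genuine one. A critical edge `(i, j)` lies on a cycle of weight
`1`, so it is closed up by a walk of weight `(A i j)⁻¹`; hence a closed walk along critical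
edges has weight exactly `1`.

Let a path of length `t = a + b` visit `c ∈ N_c` after `a` steps, and let `φ` go round a closed
walk of the subgraph through `c` of length `ℓ + 1`, so that every stretch of `φ` from `c` back to
`c` has weight `1`. Write `γ (ℓ + 1) = M + 1` and insert `(M + 1) t` steps of `φ` at `c`. Cut
after `M a` and after `M a + t` of these steps, the lengthened path splits into a prefix of length
`(M + 1) a`, a multiple of `γ` and hence bounded by `C`, `t` steps inside the subgraph, bounded by
`S^t`, and a suffix of length `(M + 1) b`, bounded by `R`.
-/

section MatrixAlgebra

variable {n : ℕ}

theorem le_mmul (A B : Fin n → Fin n → ℝ≥0) (i k j : Fin n) : A i k * B k j ≤ mmul A B i j :=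
  Finset.le_sup (f := fun k => A i k * B k j) (Finset.mem_univ k)

theorem mmul_assoc (A B C : Fin n → Fin n → ℝ≥0) : mmul (mmul A B) C = mmul A (mmul B C) := by
  funext i j
  simp only [mmul, NNReal.finset_sup_mul, NNReal.mul_finset_sup, mul_assoc]
  exact Finset.sup_comm _ _ _

theorem mpow_zero_mmul (A B : Fin n → Fin n → ℝ≥0) : mmul (mpow A 0) B = B := by
  funext i j
  refine le_antisymm (Finset.sup_le fun k _ => ?_) ?_
  · by_cases h : i = k <;> simp [mpow, h]
  · simpa [mpow] using le_mmul (mpow A 0) B i i j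

theorem mpow_add (A : Fin n → Fin n → ℝ≥0) (a b : ℕ) :
    mpow A (a + b) = mmul (mpow A a) (mpow A b) := by
  induction a with
  | zero => rw [Nat.zero_add, mpow_zero_mmul]
  | succ a ih =>
    rw [Nat.succ_add]
    change mmul A (mpow A (a + b)) = mmul (mmul A (mpow A a)) (mpow A b)
    rw [ih, mmul_assoc]

theorem mpow_mul (A : Fin n → Fin n → ℝ≥0) (a b : ℕ) : mpow A (a * b) = mpow (mpow A a) b := by
  induction b with
  | zero => rfl
  | succ b ih =>
    rw [Nat.mul_succ, Nat.add_comm, mpow_add, ih]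
    rfl

theorem mpow_mul_mpow_le (A : Fin n → Fin n → ℝ≥0) (a b : ℕ) (i c j : Fin n) :
    mpow A a i c * mpow A b c j ≤ mpow A (a + b) i j := by
  rw [mpow_add]
  exact le_mmul _ _ i c j

end MatrixAlgebra

section Walks

variable {n : ℕ} (A : Fin n → Fin n → ℝ≥0)

/-- Walks are sequences `ℕ → Fin n`, of which `walkWeight A f L` reads the first `L + 1` nodes. -/
noncomputable def walkWeight (f : ℕ → Fin n) (L : ℕ) : ℝ≥0 :=
  ∏ m ∈ Finset.range L, A (f m) (f (m + 1))

theorem walkWeight_add (f : ℕ → Fin n) (k l : ℕ) :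
    walkWeight A f (k + l) = walkWeight A f k * walkWeight A (fun m => f (k + m)) l :=
  Finset.prod_range_add _ k l

theorem walkWeight_add_add (f : ℕ → Fin n) (k l r : ℕ) :
    walkWeight A f (k + l + r) = walkWeight A f k * walkWeight A (fun m => f (k + m)) l *
      walkWeight A (fun m => f (k + l + m)) r := by
  rw [walkWeight_add, walkWeight_add]

theorem walkWeight_succ (f : ℕ → Fin n) (L : ℕ) :
    walkWeight A f (L + 1) = walkWeight A f L * A (f L) (f (L + 1)) :=
  Finset.prod_range_succ _ L

theorem walkWeight_succ' (f : ℕ → Fin n) (L : ℕ) :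
    walkWeight A f (L + 1) = A (f 0) (f 1) * walkWeight A (fun m => f (m + 1)) L := by
  rw [walkWeight, Finset.prod_range_succ', mul_comm]
  rfl

theorem pathWeight_coe (f : ℕ → Fin n) (L : ℕ) :
    pathWeight A L (fun s => f s) = walkWeight A f L :=
  Fin.prod_univ_eq_prod_range (fun m => A (f m) (f (m + 1))) L

def extendPath {k : ℕ} (p : Fin (k + 1) → Fin n) : ℕ → Fin n :=
  fun m => p (Fin.clamp m k)

theorem extendPath_coe {k : ℕ} (p : Fin (k + 1) → Fin n) (s : Fin (k + 1)) :
    extendPath p s = p s :=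
  congrArg p (Fin.ext (min_eq_left (Fin.is_le s)))

theorem extendPath_zero {k : ℕ} (p : Fin (k + 1) → Fin n) : extendPath p 0 = p 0 :=
  extendPath_coe p 0

theorem extendPath_last {k : ℕ} (p : Fin (k + 1) → Fin n) : extendPath p k = p (Fin.last k) :=
  extendPath_coe p (Fin.last k)

theorem pathWeight_eq_walkWeight_extendPath {k : ℕ} (p : Fin (k + 1) → Fin n) :
    pathWeight A k p = walkWeight A (extendPath p) k := by
  rw [← pathWeight_coe]
  simp only [extendPath_coe]

theorem walkWeight_le_mpow (f : ℕ → Fin n) (L : ℕ) : walkWeight A f L ≤ mpow A L (f 0) (f L) := by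
  induction L generalizing f with
  | zero => simp [walkWeight, mpow]
  | succ L ih =>
    rw [walkWeight_succ']
    exact (mul_le_mul' le_rfl (ih _)).trans (le_mmul A (mpow A L) _ _ _)

theorem exists_walk_of_mpow_ne_zero {L : ℕ} {i j : Fin n} (h : mpow A L i j ≠ 0) :
    ∃ f : ℕ → Fin n, f 0 = i ∧ f L = j ∧ walkWeight A f L = mpow A L i j := by
  induction L generalizing i with
  | zero =>
    have hij : i = j := by
      by_contra hij
      exact h (if_neg hij)
    exact ⟨fun _ => i, rfl, hij, by simp [walkWeight, mpow, hij]⟩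
  | succ L ih =>
    obtain ⟨k, -, hk⟩ := Finset.exists_mem_eq_sup Finset.univ ⟨i, Finset.mem_univ i⟩
      fun k => A i k * mpow A L k j
    have hL : mpow A (L + 1) i j = A i k * mpow A L k j := hk
    obtain ⟨g, hg0, hgL, hgw⟩ := ih (right_ne_zero_of_mul (hL ▸ h))
    refine ⟨fun | 0 => i | m + 1 => g m, rfl, hgL, ?_⟩
    rw [walkWeight_succ', hL, ← hgw, ← hg0]

theorem exists_lt_le_map_eq (f : ℕ → Fin n) : ∃ x y, x < y ∧ y ≤ n ∧ f x = f y := by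
  obtain ⟨x, y, hxy, h⟩ :=
    Fintype.exists_ne_map_eq_of_card_lt (fun s : Fin (n + 1) => f s) (by simp)
  rcases lt_or_gt_of_ne (Fin.val_ne_of_ne hxy) with hlt | hlt
  · exact ⟨x, y, hlt, Fin.is_le y, h⟩
  · exact ⟨y, x, hlt, Fin.is_le x, h.symm⟩

end Walks

section MaxCycleMean

variable {n : ℕ} (A : Fin n → Fin n → ℝ≥0)

theorem pathWeight_rpow_le_mcgm {k : ℕ} (hk : 0 < k) (hkn : k ≤ n) {p : Fin (k + 1) → Fin n}
    (hp : p 0 = p (Fin.last k)) : pathWeight A k p ^ ((1 : ℝ) / k) ≤ mcgm A := by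
  refine le_csSup ?_ ⟨k, hk, hkn, p, hp, rfl⟩
  refine ((Set.finite_range fun q : (Σ m : Fin (n + 1), Fin (m + 1) → Fin n) =>
    pathWeight A q.1 q.2 ^ ((1 : ℝ) / q.1)).subset ?_).bddAbove
  rintro _ ⟨m, -, hmn, q, -, rfl⟩
  exact ⟨⟨⟨m, Nat.lt_succ_of_le hmn⟩, q⟩, rfl⟩

theorem walkWeight_le_one_of_closed (hA : mcgm A ≤ 1) {f : ℕ → Fin n} {L : ℕ} (hL : 0 < L)
    (hLn : L ≤ n) (hf : f 0 = f L) : walkWeight A f L ≤ 1 := by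
  have h := (pathWeight_rpow_le_mcgm A hL hLn (p := fun s => f s) hf).trans hA
  rwa [pathWeight_coe, one_div, NNReal.rpow_inv_le_iff (by positivity), NNReal.one_rpow] at h

theorem exists_le_mpow_ge (hA : mcgm A ≤ 1) (L : ℕ) (i j : Fin n) :
    ∃ L' ≤ n, mpow A L i j ≤ mpow A L' i j := by
  induction L using Nat.strong_induction_on with
  | _ L ih =>
  rcases le_or_gt L n with hLn | hnL
  · exact ⟨L, hLn, le_rfl⟩
  by_cases h0 : mpow A L i j = 0
  · exact ⟨0, Nat.zero_le n, by simp [h0]⟩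
  obtain ⟨f, rfl, rfl, hf⟩ := exists_walk_of_mpow_ne_zero A h0
  obtain ⟨x, y, hxy, hyn, hfxy⟩ := exists_lt_le_map_eq f
  obtain ⟨d, rfl⟩ := Nat.exists_eq_add_of_lt hxy
  obtain ⟨r, rfl⟩ : ∃ r, L = x + (d + 1) + r := ⟨L - (x + d + 1), by omega⟩
  have hcycle : walkWeight A (fun m => f (x + m)) (d + 1) ≤ 1 :=
    walkWeight_le_one_of_closed A hA d.succ_pos (by omega) hfxy
  have hshort : mpow A (x + (d + 1) + r) (f 0) (f (x + (d + 1) + r)) ≤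
      mpow A (x + r) (f 0) (f (x + (d + 1) + r)) :=
    calc mpow A (x + (d + 1) + r) (f 0) (f (x + (d + 1) + r))
        = walkWeight A f x * walkWeight A (fun m => f (x + m)) (d + 1) *
            walkWeight A (fun m => f (x + (d + 1) + m)) r := by rw [← hf, walkWeight_add_add]
      _ ≤ mpow A x (f 0) (f x) * 1 * mpow A r (f (x + d + 1)) (f (x + (d + 1) + r)) := by
        gcongr
        · exact walkWeight_le_mpow A f x
        · exact walkWeight_le_mpow A _ r
      _ ≤ mpow A (x + r) (f 0) (f (x + (d + 1) + r)) := by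
        rw [mul_one, ← hfxy]
        exact mpow_mul_mpow_le A x r _ _ _
  obtain ⟨L', hL'n, hL'⟩ := ih (x + r) (by omega)
  exact ⟨L', hL'n, hshort.trans hL'⟩

theorem mpow_self_le_one (hA : mcgm A ≤ 1) (L : ℕ) (i : Fin n) : mpow A L i i ≤ 1 := by
  obtain ⟨L', hL'n, hL⟩ := exists_le_mpow_ge A hA L i i
  refine hL.trans ?_
  rcases Nat.eq_zero_or_pos L' with rfl | hL'
  · simp [mpow]
  by_cases h0 : mpow A L' i i = 0
  · exact h0 ▸ zero_le_one
  obtain ⟨f, hf0, hfL, hf⟩ := exists_walk_of_mpow_ne_zero A h0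
  exact hf ▸ walkWeight_le_one_of_closed A hA hL' hL'n (hf0.trans hfL.symm)

theorem bddAbove_range_mpow (hA : mcgm A ≤ 1) (i j : Fin n) :
    BddAbove (Set.range fun L => mpow A L i j) := by
  refine ⟨(Finset.range (n + 1)).sup fun L => mpow A L i j, ?_⟩
  rintro _ ⟨L, rfl⟩
  obtain ⟨L', hL'n, hL⟩ := exists_le_mpow_ge A hA L i j
  exact hL.trans (Finset.le_sup (f := fun L => mpow A L i j) (Finset.mem_range_succ_iff.2 hL'n))

theorem mpow_mul_le_kleeneStar (hA : mcgm A ≤ 1) (γ M : ℕ) (i j : Fin n) :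
    mpow A (γ * M) i j ≤ kleeneStar (mpow A γ) i j := by
  rw [mpow_mul]
  refine le_ciSup (f := fun M => mpow (mpow A γ) M i j) ((bddAbove_range_mpow A hA i j).mono ?_) M
  rintro _ ⟨M, rfl⟩
  exact ⟨γ * M, by simp only [mpow_mul]⟩

theorem walkWeight_mul_walkWeight_le_kleeneStar (hA : mcgm A ≤ 1) {f g : ℕ → Fin n}
    {k l γ M : ℕ} (hfg : f k = g 0) (hkl : k + l = γ * M) :
    walkWeight A f k * walkWeight A g l ≤ kleeneStar (mpow A γ) (f 0) (g l) :=
  calc walkWeight A f k * walkWeight A g l ≤ mpow A k (f 0) (f k) * mpow A l (g 0) (g l) :=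
        mul_le_mul' (walkWeight_le_mpow A f k) (walkWeight_le_mpow A g l)
    _ ≤ mpow A (γ * M) (f 0) (g l) := by
        rw [hfg, ← hkl]
        exact mpow_mul_mpow_le A k l _ _ _
    _ ≤ kleeneStar (mpow A γ) (f 0) (g l) := mpow_mul_le_kleeneStar A hA γ M _ _

end MaxCycleMean

section Critical

variable {n : ℕ} {A : Fin n → Fin n → ℝ≥0}

theorem IsCriticalEdge.exists_one_le_mul_mpow (h1 : mcgm A = 1) {i j : Fin n}
    (hij : IsCriticalEdge A i j) :
    ∃ K, 1 ≤ A i j * mpow A K j i := by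
  obtain ⟨k, hk, -, p, hp, hw, s, hsi, hsj⟩ := hij
  set f := extendPath p
  have hone : 1 ≤ walkWeight A f k := by
    rw [← pathWeight_eq_walkWeight_extendPath, ← NNReal.one_rpow (k : ℝ),
      ← NNReal.le_rpow_inv_iff (by positivity), ← one_div, hw, h1]
  have hfi : f s = i := (extendPath_coe p s.castSucc).trans hsi
  have hfj : f (s + 1) = j := (extendPath_coe p s.succ).trans hsj
  obtain ⟨r, hr⟩ : ∃ r, k = s + 1 + r := ⟨k - (s + 1), by omega⟩
  have hfr : f (s + 1 + r) = f 0 := by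
    rw [← hr]
    exact (extendPath_last p).trans (hp.symm.trans (extendPath_zero p).symm)
  refine ⟨r + s, hone.trans ?_⟩
  calc walkWeight A f k
      = walkWeight A f s * walkWeight A (fun m => f (s + m)) 1 *
          walkWeight A (fun m => f (s + 1 + m)) r :=
            (congrArg (walkWeight A f) hr).trans (walkWeight_add_add A f s 1 r)
    _ ≤ mpow A s (f 0) i * A i j * mpow A r j (f 0) := by
        gcongr
        · exact hfi ▸ walkWeight_le_mpow A f s
        · simp [walkWeight, hfi, hfj]
        · exact hfj ▸ hfr ▸ walkWeight_le_mpow A _ r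
    _ = A i j * (mpow A r j (f 0) * mpow A s (f 0) i) := by ring
    _ ≤ A i j * mpow A (r + s) j i := by gcongr; exact mpow_mul_mpow_le A r s _ _ _

theorem exists_one_le_mpow_mul_walkWeight (h1 : mcgm A = 1) {E : Fin n → Fin n → Prop}
    (hE : ∀ i j, E i j → IsCriticalEdge A i j) {f : ℕ → Fin n} {L : ℕ}
    (hf : ∀ m < L, E (f m) (f (m + 1))) : ∃ K, 1 ≤ mpow A K (f L) (f 0) * walkWeight A f L := by
  induction L with
  | zero => exact ⟨0, by simp [walkWeight, mpow]⟩
  | succ L ih =>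
    obtain ⟨K, hK⟩ := ih fun m hm => hf m (by omega)
    obtain ⟨K', hK'⟩ := (hE _ _ (hf L L.lt_succ_self)).exists_one_le_mul_mpow h1
    refine ⟨K' + K, ?_⟩
    calc 1 ≤ A (f L) (f (L + 1)) * mpow A K' (f (L + 1)) (f L) *
          (mpow A K (f L) (f 0) * walkWeight A f L) := one_le_mul hK' hK
      _ = mpow A K' (f (L + 1)) (f L) * mpow A K (f L) (f 0) *
          (walkWeight A f L * A (f L) (f (L + 1))) := by ring
      _ ≤ mpow A (K' + K) (f (L + 1)) (f 0) * walkWeight A f (L + 1) := by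
        rw [walkWeight_succ]
        gcongr
        exact mpow_mul_mpow_le A K' K _ _ _

theorem walkWeight_eq_one_of_closed (h1 : mcgm A = 1) {E : Fin n → Fin n → Prop}
    (hE : ∀ i j, E i j → IsCriticalEdge A i j) {f : ℕ → Fin n} {L : ℕ}
    (hf : ∀ m < L, E (f m) (f (m + 1))) (hcl : f L = f 0) : walkWeight A f L = 1 := by
  obtain ⟨K, hK⟩ := exists_one_le_mpow_mul_walkWeight h1 hE hf
  rw [hcl] at hK
  refine le_antisymm ?_ ?_
  · calc walkWeight A f L ≤ mpow A L (f 0) (f L) := walkWeight_le_mpow A f L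
      _ ≤ 1 := hcl ▸ mpow_self_le_one A h1.le L (f 0)
  · calc 1 ≤ mpow A K (f 0) (f 0) * walkWeight A f L := hK
      _ ≤ 1 * walkWeight A f L := by gcongr; exact mpow_self_le_one A h1.le K (f 0)
      _ = walkWeight A f L := one_mul _

end Critical

section Cyclicity

theorem setGcd_dvd {S : Set ℕ} {s : ℕ} (hs : s ∈ S) : setGcd S ∣ s := by
  obtain ⟨a, ha⟩ := Submodule.IsPrincipal.principal (Ideal.span (((↑) : ℕ → ℤ) '' S))
  have hmem : ∀ x, x ∈ Ideal.span (((↑) : ℕ → ℤ) '' S) ↔ a ∣ x := fun x => by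
    rw [ha, ← Ideal.span, Ideal.mem_span_singleton]
  have hgcd : a.natAbs ∈ {d | (∀ s ∈ S, d ∣ s) ∧ ∀ e : ℕ, (∀ s ∈ S, e ∣ s) → e ∣ d} := by
    refine ⟨fun s hs => ?_, fun e he => ?_⟩
    · exact Int.dvd_natCast.1 ((hmem s).1 (Ideal.subset_span ⟨s, hs, rfl⟩))
    · have hle : Ideal.span (((↑) : ℕ → ℤ) '' S) ≤ Ideal.span {(e : ℤ)} := by
        rw [Ideal.span_le]
        rintro _ ⟨s, hs, rfl⟩
        exact Ideal.mem_span_singleton.2 (Int.natCast_dvd_natCast.2 (he s hs))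
      exact Int.natCast_dvd.1 (Ideal.mem_span_singleton.1 (hle ((hmem a).2 dvd_rfl)))
  exact (Nat.sInf_mem ⟨_, hgcd⟩).1 s hs

theorem graphCyc_pos {n : ℕ} (E : Fin n → Fin n → Prop) : 0 < graphCyc E := by
  refine Nat.pos_of_ne_zero fun h => ?_
  obtain ⟨i, -, hi⟩ := Finset.lcm_eq_zero_iff.1 h
  split_ifs at hi with hne
  obtain ⟨s, hs⟩ := hne
  exact hs.1.ne' (Nat.eq_zero_of_zero_dvd (hi ▸ setGcd_dvd hs))

end Cyclicity

section Subgraph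

variable {n : ℕ} {A : Fin n → Fin n → ℝ≥0}

theorem CritSubgraph.exists_edge_into (G : CritSubgraph A) {c : Fin n} (hc : G.Nc c) :
    ∃ j, G.E j c := by
  rcases hc with ⟨j, hcj⟩ | hin
  · obtain ⟨k, q, hq, hq0, hql⟩ := G.reducible c j hcj
    cases k with
    | zero => exact ⟨c, (hq0.symm.trans hql) ▸ hcj⟩
    | succ k => exact ⟨q (Fin.last k).castSucc, hql ▸ hq (Fin.last k)⟩
  · exact hin

theorem exists_periodic_walk_of_path {E : Fin n → Fin n → Prop} {k : ℕ} {q : Fin (k + 1) → Fin n}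
    {c j : Fin n} (hq : IsEPath E k q) (hq0 : q 0 = c) (hql : q (Fin.last k) = j)
    (hjc : E j c) :
    ∃ φ : ℕ → Fin n, φ 0 = c ∧ Function.Periodic φ (k + 1) ∧ ∀ m, E (φ m) (φ (m + 1)) := by
  refine ⟨fun m => q (Fin.ofNat (k + 1) m), hq0, fun m => congrArg q (Fin.ext (by simp)),
    fun m => ?_⟩
  have hsucc : Fin.ofNat (k + 1) (m + 1) = Fin.ofNat (k + 1) m + 1 := by
    ext
    simp [Fin.val_add, Nat.add_mod]
  show E (q (Fin.ofNat (k + 1) m)) (q (Fin.ofNat (k + 1) (m + 1)))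
  rw [hsucc]
  induction Fin.ofNat (k + 1) m using Fin.lastCases with
  | last => rwa [Fin.last_add_one, hql, hq0]
  | cast x => rw [Fin.coeSucc_eq_succ]; exact hq x

theorem CritSubgraph.exists_periodic_walk (G : CritSubgraph A) {c : Fin n} (hc : G.Nc c) :
    ∃ ℓ, ∃ φ : ℕ → Fin n, φ 0 = c ∧ Function.Periodic φ (ℓ + 1) ∧
      ∀ m, G.E (φ m) (φ (m + 1)) := by
  obtain ⟨j, hjc⟩ := G.exists_edge_into hc
  obtain ⟨k, q, hq, hq0, hql⟩ := G.reducible j c hjc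
  exact ⟨k, exists_periodic_walk_of_path hq hq0 hql hjc⟩

theorem walkWeight_Smat (G : CritSubgraph A) {f : ℕ → Fin n} {L : ℕ}
    (hf : ∀ m < L, G.E (f m) (f (m + 1))) : walkWeight (Smat A G) f L = walkWeight A f L :=
  Finset.prod_congr rfl fun m hm => if_pos (hf m (Finset.mem_range.1 hm))

theorem Cmat_of_Nc (G : CritSubgraph A) (i : Fin n) {k : Fin n} (hk : G.Nc k) :
    Cmat A G i k = kleeneStar (mpow A (graphCyc G.E)) i k :=
  if_pos hk

theorem Rmat_of_Nc (G : CritSubgraph A) {l : Fin n} (hl : G.Nc l) (j : Fin n) :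
    Rmat A G l j = kleeneStar (mpow A (graphCyc G.E)) l j :=
  if_pos hl

theorem mul_mul_le_csr (G : CritSubgraph A) (t : ℕ) (i k l j : Fin n) :
    Cmat A G i k * mpow (Smat A G) t k l * Rmat A G l j ≤ csr A G t i j :=
  (mul_le_mul' (le_mmul _ _ i k l) le_rfl).trans (le_mmul _ _ i l j)

theorem walkWeight_le_csr (h1 : mcgm A = 1) (G : CritSubgraph A) {f φ : ℕ → Fin n} {a t ℓ : ℕ}
    (ha : a ≤ t) (hφ0 : φ 0 = f a) (hφ : Function.Periodic φ (ℓ + 1))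
    (hφE : ∀ m, G.E (φ m) (φ (m + 1))) : walkWeight A f t ≤ csr A G t (f 0) (f t) := by
  obtain ⟨b, rfl⟩ := Nat.exists_eq_add_of_le ha
  set γ := graphCyc G.E
  obtain ⟨M, hM⟩ : ∃ M, γ * (ℓ + 1) = M + 1 :=
    Nat.exists_eq_succ_of_ne_zero (Nat.mul_ne_zero (graphCyc_pos G.E).ne' ℓ.succ_ne_zero)
  have hend : φ (M * a + (a + b) + M * b) = f a := by
    rw [show M * a + (a + b) + M * b = γ * (a + b) * (ℓ + 1) by rw [mul_right_comm, hM]; ring,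
      ← hφ0]
    exact_mod_cast hφ.nat_mul_eq _
  have hcyc : walkWeight A φ (M * a + (a + b) + M * b) = 1 :=
    walkWeight_eq_one_of_closed h1 G.critical (fun m _ => hφE m) (hend.trans hφ0.symm)
  have hk : G.Nc (φ (M * a)) := Or.inl ⟨_, hφE _⟩
  have hl : G.Nc (φ (M * a + (a + b))) := Or.inl ⟨_, hφE _⟩
  calc walkWeight A f (a + b)
      = walkWeight A f a * walkWeight A (fun m => f (a + m)) b *
          walkWeight A φ (M * a + (a + b) + M * b) := by rw [hcyc, mul_one, walkWeight_add]
    _ = walkWeight A f a * walkWeight A φ (M * a) *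
          walkWeight A (fun m => φ (M * a + m)) (a + b) *
          (walkWeight A (fun m => φ (M * a + (a + b) + m)) (M * b) *
            walkWeight A (fun m => f (a + m)) b) := by rw [walkWeight_add_add]; ring
    _ ≤ Cmat A G (f 0) (φ (M * a)) * mpow (Smat A G) (a + b) (φ (M * a)) (φ (M * a + (a + b))) *
          Rmat A G (φ (M * a + (a + b))) (f (a + b)) := by
        rw [Cmat_of_Nc G _ hk, Rmat_of_Nc G hl]
        gcongr
        · exact walkWeight_mul_walkWeight_le_kleeneStar A h1.le hφ0.symm (M := (ℓ + 1) * a)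
            (by rw [← mul_assoc, hM]; ring)
        · exact (walkWeight_Smat G fun m _ => hφE (M * a + m)).ge.trans
            (walkWeight_le_mpow (Smat A G) (fun m => φ (M * a + m)) (a + b))
        · exact walkWeight_mul_walkWeight_le_kleeneStar A h1.le hend (M := (ℓ + 1) * b)
            (by rw [← mul_assoc, hM]; ring)
    _ ≤ csr A G (a + b) (f 0) (f (a + b)) := mul_mul_le_csr G _ _ _ _ _

end Subgraph

/-- the weight of any path of length `t` from `i` to `j` that
passes through a node of the critical subgraph is at most `P^(t)_{ij}`. -/
theorem heavy_path_le_csr {n : ℕ} (A : Fin n → Fin n → ℝ≥0) (h1 : mcgm A = 1)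
    (G : CritSubgraph A) (t : ℕ) (i j : Fin n)
    (p : Fin (t+1) → Fin n) (hp0 : p 0 = i) (hpl : p (Fin.last t) = j)
    (hheavy : ∃ s, G.Nc (p s)) :
    pathWeight A t p ≤ csr A G t i j := by
  obtain ⟨s, hs⟩ := hheavy
  obtain ⟨ℓ, φ, hφ0, hφ, hφE⟩ := G.exists_periodic_walk hs
  rw [pathWeight_eq_walkWeight_extendPath, ← hp0, ← hpl, ← extendPath_zero p, ← extendPath_last p]
  exact walkWeight_le_csr h1 G (Fin.is_le s) (hφ0.trans (extendPath_coe p s).symm) hφ hφE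

end MaxAlg
end

section
/- In the ultimate-expansion construction for A ∈ ℝ≥0^{n×n} (where at each step one removes all nodes of the entire strongly connected components of D(A) that contain critical components of A_μ^u), each value λ_ν^u equals some λ_μ of the canonical Nachtigall sequence, and every strongly connected component of the critical graph C_ν^u is also a strongly connected component of the corresponding canonical critical graph C_μ = Crit(A_μ). Consequently the cyclicity γ_μ of C_μ is a multiple of the cyclicity γ_μ^u of C_μ^u for every μ in the matching index set Σ. -/
open scoped NNReal Classical

namespace MaxAlg

/-- `i` lies in a strongly connected component of `D(A)` that contains a
critical node of `B`. -/
def InCompClosure {n : ℕ} (A B : Fin n → Fin n → ℝ≥0) (i : Fin n) : Prop :=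
  ∃ j, IsCriticalNode B j ∧ j ∈ scc (edges A) i

/-!
Each step of the ultimate construction keeps the restriction of `A` to a union `s` of strongly
connected components of `D(A)`. Let `μ` be the first canonical index with `λ_μ ≤ λ(A_ν^u)`.
A critical cycle of an earlier `A_ρ` through a node of `s` stays inside one component, hence
inside `s`, so it would be a cycle of `A_ν^u` of mean `λ_ρ > λ(A_ν^u)`; therefore `s` survives
in `A_μ`, and `λ(A_ν^u) ≤ λ_μ` forces equality. For the same reason every critical cycle of `A_μ`
meeting `s` is a critical cycle of `A_ν^u`, so the critical graph of `A_ν^u` is the part of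
`Crit(A_μ)` leaving `s`, and `s` is closed under it: the two critical graphs have the same
components through `s`, with the same cycle lengths.
-/

section Walks

variable {n : ℕ} {E F : Fin n → Fin n → Prop}

theorem IsEPath.mono (h : ∀ a b, E a b → F a b) {k : ℕ} {p : Fin (k+1) → Fin n}
    (hp : IsEPath E k p) : IsEPath F k p :=
  fun t => h _ _ (hp t)

theorem IsEPath.reflTransGen_zero {k : ℕ} {p : Fin (k+1) → Fin n} (hp : IsEPath E k p)
    (x : Fin (k+1)) : Relation.ReflTransGen E (p 0) (p x) :=
  Fin.induction .refl (fun t ih => ih.tail (hp t)) x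

theorem IsEPath.reflTransGen_last {k : ℕ} {p : Fin (k+1) → Fin n} (hp : IsEPath E k p)
    (x : Fin (k+1)) : Relation.ReflTransGen E (p x) (p (Fin.last k)) :=
  Fin.reverseInduction .refl (fun t ih => ih.head (hp t)) x

theorem reach_iff_reflTransGen {i j : Fin n} : Reach E i j ↔ Relation.ReflTransGen E i j := by
  constructor
  · rintro ⟨k, p, hp, rfl, rfl⟩
    exact hp.reflTransGen_zero _
  · intro h
    induction h with
    | refl => exact ⟨0, fun _ => i, fun t => t.elim0, rfl, rfl⟩
    | @tail b c _ hbc ih =>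
      obtain ⟨k, p, hp, h0, hl⟩ := ih
      refine ⟨k + 1, Fin.snoc p c, fun t => ?_, ?_, by simp⟩
      · refine Fin.lastCases ?_ (fun t' => ?_) t
        · rw [Fin.succ_last, Fin.snoc_last, Fin.snoc_castSucc, hl]
          exact hbc
        · rw [Fin.succ_castSucc, Fin.snoc_castSucc, Fin.snoc_castSucc]
          exact hp t'
      · rw [← Fin.castSucc_zero, Fin.snoc_castSucc, h0]

theorem mem_scc_iff {i j : Fin n} :
    j ∈ scc E i ↔ Relation.ReflTransGen E i j ∧ Relation.ReflTransGen E j i := by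
  simp only [scc, Set.mem_ofPred_eq, reach_iff_reflTransGen]

theorem mem_scc_comm {i j : Fin n} : j ∈ scc E i ↔ i ∈ scc E j := by
  simp only [mem_scc_iff, and_comm]

theorem mem_scc_trans {i j c : Fin n} (hj : j ∈ scc E i) (hc : c ∈ scc E j) : c ∈ scc E i := by
  rw [mem_scc_iff] at *
  exact ⟨hj.1.trans hc.1, hc.2.trans hj.2⟩

theorem IsEPath.mem_scc_of_closed {k : ℕ} {p : Fin (k+1) → Fin n} (hp : IsEPath E k p)
    (hcl : p 0 = p (Fin.last k)) (x y : Fin (k+1)) : p x ∈ scc E (p y) := by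
  have hmem : ∀ z, p z ∈ scc E (p 0) := fun z =>
    mem_scc_iff.2 ⟨hp.reflTransGen_zero z, hcl ▸ hp.reflTransGen_last z⟩
  exact mem_scc_trans (mem_scc_comm.1 (hmem y)) (hmem x)

theorem exists_rel_of_cycLen_nonempty {i : Fin n} (h : (cycLen E i).Nonempty) : ∃ j, E j i := by
  obtain ⟨k, hk, p, hp, -, hl⟩ := h
  obtain ⟨k, rfl⟩ := Nat.exists_eq_succ_of_ne_zero hk.ne'
  exact ⟨_, hl ▸ Fin.succ_last k ▸ hp (Fin.last k)⟩

theorem graphCyc_dvd_of_cycLen_eq (h : ∀ i, (cycLen E i).Nonempty → cycLen E i = cycLen F i) :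
    graphCyc E ∣ graphCyc F := by
  refine Finset.lcm_dvd fun i _ => ?_
  by_cases hne : (cycLen E i).Nonempty
  · rw [h i hne]
    exact Finset.dvd_lcm (Finset.mem_univ i)
  · rw [if_neg hne]
    exact one_dvd _

structure IsForwardRestriction (E F : Fin n → Fin n → Prop) (s : Set (Fin n)) : Prop where
  le : ∀ a b, E a b → F a b
  of_mem : ∀ a b, a ∈ s → F a b → E a b
  target_mem : ∀ a b, E a b → b ∈ s

namespace IsForwardRestriction

variable {s : Set (Fin n)} (hR : IsForwardRestriction E F s)
include hR

theorem mem_of_reflTransGen {a b : Fin n} (ha : a ∈ s) (h : Relation.ReflTransGen E a b) :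
    b ∈ s := by
  rcases h.cases_tail with rfl | ⟨c, -, hcb⟩
  exacts [ha, hR.target_mem c b hcb]

theorem reflTransGen_of_mem {a b : Fin n} (ha : a ∈ s) (h : Relation.ReflTransGen F a b) :
    Relation.ReflTransGen E a b := by
  induction h using Relation.ReflTransGen.head_induction_on with
  | refl => exact .refl
  | head hac _ ih =>
    have hE := hR.of_mem _ _ ha hac
    exact (ih (hR.target_mem _ _ hE)).head hE

theorem scc_eq {i : Fin n} (hi : i ∈ s) : scc E i = scc F i := by
  ext j
  simp only [mem_scc_iff]
  refine ⟨fun h => ⟨Relation.ReflTransGen.mono hR.le _ _ h.1, Relation.ReflTransGen.mono hR.le _ _ h.2⟩, fun h => ?_⟩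
  have hij := hR.reflTransGen_of_mem hi h.1
  exact ⟨hij, hR.reflTransGen_of_mem (hR.mem_of_reflTransGen hi hij) h.2⟩

theorem rel_iff {i a b : Fin n} (hi : i ∈ s) (ha : a ∈ scc E i) : E a b ↔ F a b :=
  ⟨hR.le a b, hR.of_mem a b (hR.mem_of_reflTransGen hi (mem_scc_iff.1 ha).1)⟩

theorem cycLen_eq {i : Fin n} (hi : i ∈ s) : cycLen E i = cycLen F i := by
  ext k
  refine ⟨fun ⟨hk, p, hp, h0, hl⟩ => ⟨hk, p, hp.mono hR.le, h0, hl⟩,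
    fun ⟨hk, p, hp, h0, hl⟩ => ⟨hk, p, fun t => ?_, h0, hl⟩⟩
  have hmem : p t.castSucc ∈ scc E i := by
    rw [hR.scc_eq hi, ← h0]
    exact hp.mem_scc_of_closed (h0.trans hl.symm) _ 0
  exact (hR.rel_iff hi hmem).2 (hp t)

theorem graphCyc_dvd : graphCyc E ∣ graphCyc F :=
  graphCyc_dvd_of_cycLen_eq fun i hne =>
    hR.cycLen_eq (hR.target_mem _ i (exists_rel_of_cycLen_nonempty hne).choose_spec)

end IsForwardRestriction

end Walks

section CycleMeans

variable {n : ℕ} {B C : Fin n → Fin n → ℝ≥0}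

theorem pathWeight_ne_zero_iff {k : ℕ} {p : Fin (k+1) → Fin n} :
    pathWeight B k p ≠ 0 ↔ IsEPath (edges B) k p := by
  simp only [pathWeight, Finset.prod_ne_zero_iff, Finset.mem_univ, true_implies, IsEPath, edges]

theorem pathWeight_congr {k : ℕ} {p : Fin (k+1) → Fin n}
    (h : ∀ t : Fin k, B (p t.castSucc) (p t.succ) = C (p t.castSucc) (p t.succ)) :
    pathWeight B k p = pathWeight C k p :=
  Finset.prod_congr rfl fun t _ => h t

theorem pathWeight_mono (h : B ≤ C) (k : ℕ) (p : Fin (k+1) → Fin n) :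
    pathWeight B k p ≤ pathWeight C k p :=
  Finset.prod_le_prod (fun _ _ => zero_le) fun _ _ => h _ _

theorem edges_mono (h : B ≤ C) {a b : Fin n} (hab : edges B a b) : edges C a b :=
  (pos_iff_ne_zero.2 hab |>.trans_le (h a b)).ne'

theorem pathWeight_ne_zero_of_rpow_eq_mcgm {k : ℕ} {p : Fin (k+1) → Fin n} (hk : 0 < k)
    (hw : pathWeight B k p ^ ((1 : ℝ) / k) = mcgm B) (h0 : mcgm B ≠ 0) : pathWeight B k p ≠ 0 := by
  rintro hzero
  rw [hzero, NNReal.zero_rpow (one_div_ne_zero (Nat.cast_ne_zero.2 hk.ne'))] at hw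
  exact h0 hw.symm

/-- The set whose supremum is `mcgm B`. -/
def cycleMeans (B : Fin n → Fin n → ℝ≥0) : Set ℝ≥0 :=
  {x | ∃ k : ℕ, 0 < k ∧ k ≤ n ∧ ∃ p : Fin (k+1) → Fin n,
    p 0 = p (Fin.last k) ∧ x = pathWeight B k p ^ ((1 : ℝ) / (k : ℝ))}

theorem cycleMeans_finite (B : Fin n → Fin n → ℝ≥0) : (cycleMeans B).Finite := by
  refine ((Set.finite_Iic n).biUnion fun k _ =>
    Set.finite_range fun p : Fin (k+1) → Fin n => pathWeight B k p ^ ((1 : ℝ) / k)).subset ?_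
  rintro x ⟨k, -, hkn, p, -, rfl⟩
  exact Set.mem_biUnion hkn ⟨p, rfl⟩

theorem rpow_pathWeight_le_mcgm {k : ℕ} {p : Fin (k+1) → Fin n} (hk : 0 < k) (hkn : k ≤ n)
    (hcl : p 0 = p (Fin.last k)) : pathWeight B k p ^ ((1 : ℝ) / k) ≤ mcgm B :=
  le_csSup (cycleMeans_finite B).bddAbove ⟨k, hk, hkn, p, hcl, rfl⟩

theorem mcgm_mono (h : B ≤ C) : mcgm B ≤ mcgm C := by
  refine csSup_le' ?_
  rintro _ ⟨k, hk, hkn, p, hcl, rfl⟩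
  exact (NNReal.rpow_le_rpow (pathWeight_mono h k p) (by positivity)).trans
    (rpow_pathWeight_le_mcgm hk hkn hcl)

theorem IsCriticalEdge.of_le (hBC : B ≤ C) (heq : mcgm B = mcgm C) {a b : Fin n}
    (h : IsCriticalEdge B a b) : IsCriticalEdge C a b := by
  obtain ⟨k, hk, hkn, p, hcl, hw, t, hta, htb⟩ := h
  refine ⟨k, hk, hkn, p, hcl, le_antisymm (rpow_pathWeight_le_mcgm hk hkn hcl) ?_, t, hta, htb⟩
  calc mcgm C = pathWeight B k p ^ ((1 : ℝ) / k) := heq ▸ hw.symm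
    _ ≤ pathWeight C k p ^ ((1 : ℝ) / k) :=
      NNReal.rpow_le_rpow (pathWeight_mono hBC k p) (by positivity)

theorem IsCriticalEdge.apply_ne_zero (h0 : mcgm B ≠ 0) {a b : Fin n}
    (h : IsCriticalEdge B a b) : B a b ≠ 0 := by
  obtain ⟨k, hk, -, p, -, hw, t, rfl, rfl⟩ := h
  exact pathWeight_ne_zero_iff.1 (pathWeight_ne_zero_of_rpow_eq_mcgm hk hw h0) t

theorem IsCriticalNode.exists_cycle {i : Fin n} (h : IsCriticalNode B i) :
    ∃ k, 0 < k ∧ k ≤ n ∧ ∃ p : Fin (k+1) → Fin n, p 0 = p (Fin.last k) ∧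
      pathWeight B k p ^ ((1 : ℝ) / k) = mcgm B ∧ ∃ x, p x = i := by
  rcases h with ⟨_, k, hk, hkn, p, hcl, hw, t, ht, -⟩ | ⟨_, k, hk, hkn, p, hcl, hw, t, -, ht⟩
  exacts [⟨k, hk, hkn, p, hcl, hw, _, ht⟩, ⟨k, hk, hkn, p, hcl, hw, _, ht⟩]

end CycleMeans

section RestrictNodes

variable {n : ℕ} {A : Fin n → Fin n → ℝ≥0} {s t : Set (Fin n)}

noncomputable def restrictNodes (A : Fin n → Fin n → ℝ≥0) (s : Set (Fin n)) : Fin n → Fin n → ℝ≥0 :=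
  fun i j => if i ∈ s ∧ j ∈ s then A i j else 0

theorem restrictNodes_le : restrictNodes A s ≤ A := fun i j => by
  unfold restrictNodes
  split_ifs <;> simp

theorem restrictNodes_mono (h : s ⊆ t) : restrictNodes A s ≤ restrictNodes A t := fun i j => by
  unfold restrictNodes
  split_ifs with hs ht
  exacts [le_rfl, absurd ⟨h hs.1, h hs.2⟩ ht, zero_le, le_rfl]

theorem mem_of_restrictNodes_ne_zero {a b : Fin n} (h : restrictNodes A s a b ≠ 0) :
    a ∈ s ∧ b ∈ s := by
  by_contra hab
  exact h (if_neg hab)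

theorem restrictNodes_apply_of_ne_zero {a b : Fin n} (h : restrictNodes A s a b ≠ 0) :
    restrictNodes A s a b = A a b :=
  if_pos (mem_of_restrictNodes_ne_zero h)

theorem IsCriticalNode.mem_of_restrictNodes (h0 : mcgm (restrictNodes A s) ≠ 0) {i : Fin n}
    (h : IsCriticalNode (restrictNodes A s) i) : i ∈ s := by
  rcases h with ⟨_, h⟩ | ⟨_, h⟩
  exacts [(mem_of_restrictNodes_ne_zero (h.apply_ne_zero h0)).1,
    (mem_of_restrictNodes_ne_zero (h.apply_ne_zero h0)).2]

/-- `s` is a union of strongly connected components of `D(A)`. -/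
def SccSaturated (A : Fin n → Fin n → ℝ≥0) (s : Set (Fin n)) : Prop :=
  ∀ ⦃i j⦄, i ∈ s → j ∈ scc (edges A) i → j ∈ s

theorem sccSaturated_setOf_not_inCompClosure (B : ℕ → Fin n → Fin n → ℝ≥0) (ν : ℕ) :
    SccSaturated A {i | ∀ ρ < ν, ¬ InCompClosure A (B ρ) i} :=
  fun _ _ hi hj ρ hρ ⟨c, hc, hcj⟩ => hi ρ hρ ⟨c, hc, mem_scc_trans hj hcj⟩

/-- A closed walk of nonzero weight in `restrictNodes A t` lies in one component of `D(A)`, so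
once it meets a saturated `s` it has the same weight in `restrictNodes A s`. -/
theorem pathWeight_restrictNodes_eq_of_mem (hs : SccSaturated A s) {k : ℕ}
    {p : Fin (k+1) → Fin n} (hcl : p 0 = p (Fin.last k))
    (hp : pathWeight (restrictNodes A t) k p ≠ 0) {x : Fin (k+1)} (hx : p x ∈ s) :
    pathWeight (restrictNodes A s) k p = pathWeight (restrictNodes A t) k p := by
  have hpt := pathWeight_ne_zero_iff.1 hp
  have hpA : IsEPath (edges A) k p := hpt.mono fun _ _ => edges_mono restrictNodes_le
  have hmem : ∀ y, p y ∈ s := fun y => hs hx (hpA.mem_scc_of_closed hcl y x)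
  exact pathWeight_congr fun e =>
    (if_pos ⟨hmem _, hmem _⟩).trans (restrictNodes_apply_of_ne_zero (hpt e)).symm

theorem mcgm_le_of_isCriticalNode (hs : SccSaturated A s) (h0 : mcgm (restrictNodes A t) ≠ 0)
    {j : Fin n} (hj : j ∈ s) (h : IsCriticalNode (restrictNodes A t) j) :
    mcgm (restrictNodes A t) ≤ mcgm (restrictNodes A s) := by
  obtain ⟨k, hk, hkn, p, hcl, hw, x, rfl⟩ := h.exists_cycle
  rw [← hw, ← pathWeight_restrictNodes_eq_of_mem hs hcl
    (pathWeight_ne_zero_of_rpow_eq_mcgm hk hw h0) hj]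
  exact rpow_pathWeight_le_mcgm hk hkn hcl

theorem IsCriticalEdge.restrictNodes_of_mem (hs : SccSaturated A s)
    (heq : mcgm (restrictNodes A s) = mcgm (restrictNodes A t))
    (h0 : mcgm (restrictNodes A t) ≠ 0) {a b : Fin n} (ha : a ∈ s)
    (h : IsCriticalEdge (restrictNodes A t) a b) : IsCriticalEdge (restrictNodes A s) a b := by
  obtain ⟨k, hk, hkn, p, hcl, hw, e, rfl, rfl⟩ := h
  have hwt := pathWeight_restrictNodes_eq_of_mem hs hcl
    (pathWeight_ne_zero_of_rpow_eq_mcgm hk hw h0) ha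
  exact ⟨k, hk, hkn, p, hcl, by rw [hwt, hw, heq], e, rfl, rfl⟩

theorem isForwardRestriction_isCriticalEdge (hs : SccSaturated A s) (hst : s ⊆ t)
    (h0 : mcgm (restrictNodes A s) ≠ 0)
    (heq : mcgm (restrictNodes A s) = mcgm (restrictNodes A t)) :
    IsForwardRestriction (IsCriticalEdge (restrictNodes A s))
      (IsCriticalEdge (restrictNodes A t)) s where
  le _ _ := IsCriticalEdge.of_le (restrictNodes_mono hst) heq
  of_mem _ _ ha := IsCriticalEdge.restrictNodes_of_mem hs heq (heq ▸ h0) ha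
  target_mem _ _ h := (mem_of_restrictNodes_ne_zero (h.apply_ne_zero h0)).2

theorem eq_restrictNodes_of_succ {S : ℕ → Fin n → Fin n → ℝ≥0} {dead : ℕ → Fin n → Prop}
    {M : ℕ} (h0 : S 0 = A)
    (hsucc : ∀ μ, μ < M → S (μ+1) = fun i j =>
      if (∀ ν ≤ μ, ¬ dead ν i) ∧ (∀ ν ≤ μ, ¬ dead ν j) then A i j else 0)
    {μ : ℕ} (hμ : μ ≤ M) : S μ = restrictNodes A {i | ∀ ν < μ, ¬ dead ν i} := by
  cases μ with
  | zero => funext i j; simp [h0, restrictNodes]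
  | succ μ =>
    rw [hsucc μ hμ]
    funext i j
    simp only [restrictNodes, Set.mem_ofPred_eq, Nat.lt_succ_iff]

end RestrictNodes

theorem ultimate_matches_nachtigall_general {n : ℕ} (A : Fin n → Fin n → ℝ≥0)
    (m mU : ℕ) (Aseq AU : ℕ → Fin n → Fin n → ℝ≥0)
    (hA0 : Aseq 0 = A) (hU0 : AU 0 = A)
    (hAsucc : ∀ μ, μ < m → Aseq (μ+1) = fun i j =>
      if (∀ ν ≤ μ, ¬ IsCriticalNode (Aseq ν) i) ∧ (∀ ν ≤ μ, ¬ IsCriticalNode (Aseq ν) j)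
      then A i j else 0)
    (hUsucc : ∀ μ, μ < mU → AU (μ+1) = fun i j =>
      if (∀ ν ≤ μ, ¬ InCompClosure A (AU ν) i) ∧ (∀ ν ≤ μ, ¬ InCompClosure A (AU ν) j)
      then A i j else 0)
    (hstop : mcgm (Aseq m) = 0)
    (hposU : ∀ μ < mU, 0 < mcgm (AU μ)) :
    ∀ ν < mU, ∃ μ < m, mcgm (AU ν) = mcgm (Aseq μ) ∧
      (∀ i, IsCriticalNode (AU ν) i →
        scc (IsCriticalEdge (AU ν)) i = scc (IsCriticalEdge (Aseq μ)) i ∧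
        ∀ a b, a ∈ scc (IsCriticalEdge (AU ν)) i → b ∈ scc (IsCriticalEdge (AU ν)) i →
          (IsCriticalEdge (AU ν) a b ↔ IsCriticalEdge (Aseq μ) a b)) ∧
      graphCyc (IsCriticalEdge (AU ν)) ∣ graphCyc (IsCriticalEdge (Aseq μ)) := by
  intro ν hν
  set s : Set (Fin n) := {i | ∀ ρ < ν, ¬ InCompClosure A (AU ρ) i}
  have hAU : AU ν = restrictNodes A s := eq_restrictNodes_of_succ hU0 hUsucc hν.le
  have hAseq (ρ : ℕ) (hρ : ρ ≤ m) :
      Aseq ρ = restrictNodes A {i | ∀ σ < ρ, ¬ IsCriticalNode (Aseq σ) i} :=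
    eq_restrictNodes_of_succ hA0 hAsucc hρ
  have hs : SccSaturated A s := sccSaturated_setOf_not_inCompClosure AU ν
  have h0 : mcgm (AU ν) ≠ 0 := (hposU ν hν).ne'
  have hex : ∃ μ, mcgm (Aseq μ) ≤ mcgm (AU ν) := ⟨m, hstop ▸ zero_le⟩
  set μ := Nat.find hex
  have hμm : μ ≤ m := Nat.find_min' hex (hstop ▸ zero_le)
  have hst : s ⊆ {i | ∀ σ < μ, ¬ IsCriticalNode (Aseq σ) i} := fun j hj σ hσ hcrit => by
    have hlt : mcgm (AU ν) < mcgm (Aseq σ) := not_le.1 (Nat.find_min hex hσ)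
    rw [hAseq σ (by omega)] at hlt hcrit
    rw [hAU] at hlt
    exact hlt.not_ge (mcgm_le_of_isCriticalNode hs (zero_le.trans_lt hlt).ne' hj hcrit)
  have heq : mcgm (AU ν) = mcgm (Aseq μ) := le_antisymm
    (hAU ▸ hAseq μ hμm ▸ mcgm_mono (restrictNodes_mono hst)) (Nat.find_spec hex)
  have hμ : μ < m := hμm.lt_of_ne fun h => h0 (heq.trans (h ▸ hstop))
  refine ⟨μ, hμ, heq, ?_⟩
  rw [hAU] at h0
  rw [hAU, hAseq μ hμm] at heq ⊢
  have hR := isForwardRestriction_isCriticalEdge hs hst h0 heq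
  exact ⟨fun i hi => ⟨hR.scc_eq (hi.mem_of_restrictNodes h0),
    fun _ _ ha _ => hR.rel_iff (hi.mem_of_restrictNodes h0) ha⟩, hR.graphCyc_dvd⟩

/-- comparison of the ultimate construction (removing whole
strongly connected components of `D(A)` containing the critical components)
with the canonical Nachtigall construction (removing only the critical nodes):
each `λ_ν^u` equals some canonical `λ_μ`, every strongly connected component of
`Crit(A_ν^u)` is also a strongly connected component of `Crit(A_μ)` (same node
set and same edges on it), and consequently the cyclicity `γ_ν^u` divides
`γ_μ`. -/
theorem ultimate_matches_nachtigall {n : ℕ} (A : Fin n → Fin n → ℝ≥0)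
    (m mU : ℕ) (Aseq AU : ℕ → Fin n → Fin n → ℝ≥0)
    (hA0 : Aseq 0 = A) (hU0 : AU 0 = A)
    (hAsucc : ∀ μ, μ < m → Aseq (μ+1) = fun i j =>
      if (∀ ν ≤ μ, ¬ IsCriticalNode (Aseq ν) i) ∧ (∀ ν ≤ μ, ¬ IsCriticalNode (Aseq ν) j)
      then A i j else 0)
    (hUsucc : ∀ μ, μ < mU → AU (μ+1) = fun i j =>
      if (∀ ν ≤ μ, ¬ InCompClosure A (AU ν) i) ∧ (∀ ν ≤ μ, ¬ InCompClosure A (AU ν) j)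
      then A i j else 0)
    (hpos : ∀ μ < m, 0 < mcgm (Aseq μ)) (hstop : mcgm (Aseq m) = 0)
    (hposU : ∀ μ < mU, 0 < mcgm (AU μ)) (hstopU : mcgm (AU mU) = 0) :
    ∀ ν < mU, ∃ μ < m, mcgm (AU ν) = mcgm (Aseq μ) ∧
      (∀ i, IsCriticalNode (AU ν) i →
        scc (IsCriticalEdge (AU ν)) i = scc (IsCriticalEdge (Aseq μ)) i ∧
        ∀ a b, a ∈ scc (IsCriticalEdge (AU ν)) i → b ∈ scc (IsCriticalEdge (AU ν)) i →
          (IsCriticalEdge (AU ν) a b ↔ IsCriticalEdge (Aseq μ) a b)) ∧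
      graphCyc (IsCriticalEdge (AU ν)) ∣ graphCyc (IsCriticalEdge (Aseq μ)) :=
  ultimate_matches_nachtigall_general A m mU Aseq AU hA0 hU0 hAsucc hUsucc hstop hposU

end MaxAlg
end
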